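/- Supremum-norm covering transfer: let μ be a probability measure, 0 < ε ≤ 1, g a nonnegative bounded function, and set f_g(x) = (√g(x)+ε)² / ∫(√g+ε)²dμ. If f is a probability density with ‖√f - √g‖_∞ ≤ ε and there exists a probability density f* with ‖√f* - √g‖_∞ ≤ ε, then ‖f/f_g‖_∞ ≤ (1+2ε)² and H*(f,f_g) ≤ 8ε, where H*(f,h)² = ∫(√f-√h)²((2/3)√(f/h)+1/3)dμ. -/

import Mathlib

/-!
Write `b = √g + ε` and `N = ∫ b² dμ`, so that `f_g = b² / N`. From `√f ≤ b` we get `f ≤ b²`, hence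
`f / f_g ≤ N` and, integrating, `1 ≤ N`. From `b ≤ √f* + 2ε` and `4ε√f* ≤ 2ε (f* + 1)` we get
`b² ≤ (1 + 2ε) f* + 2ε + 4ε²`, whose integral is `(1 + 2ε)²`. In `H*` the weight is then at most
`7/3`, and `√f_g = b / √N` differs from `√f` by at most `2ε + |b - b / √N|`, where
`∫ (b - b / √N)² dμ = (√N - 1)² ≤ 4ε²`.
-/

open MeasureTheory Real

lemma le_sq_add_of_abs_sqrt_sub_le {a s ε : ℝ} (h : |√a - s| ≤ ε) : a ≤ (s + ε) ^ 2 :=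
  (sqrt_le_iff.1 (by linarith [(abs_le.1 h).2])).2

lemma sq_add_le_of_abs_sqrt_sub_le {a s ε : ℝ} (ha : 0 ≤ a) (hε : 0 ≤ ε)
    (h : |√a - s| ≤ ε) :
    (s + ε) ^ 2 ≤ (1 + 2 * ε) * a + (2 * ε + 4 * ε ^ 2) := by
  obtain ⟨h₁, h₂⟩ := abs_le.1 h
  have hsq : (s + ε) ^ 2 ≤ (√a + 2 * ε) ^ 2 :=
    pow_le_pow_left₀ (by linarith [sqrt_nonneg a]) (by linarith) 2
  nlinarith [sq_sqrt ha, mul_nonneg hε (sq_nonneg (√a - 1))]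

lemma sq_sub_le_of_abs_sub_le {a b c δ : ℝ} (h : |a - b| ≤ δ) :
    (a - c) ^ 2 ≤ 2 * δ ^ 2 + 2 * (b - c) ^ 2 := by
  have hab : (a - b) ^ 2 ≤ δ ^ 2 := sq_le_sq' (abs_le.1 h).1 (abs_le.1 h).2
  nlinarith [sq_nonneg (a - 2 * b + c)]

lemma div_div_le_of_le {a c N : ℝ} (hac : a ≤ c) (hc : 0 < c) (hN : 0 ≤ N) :
    a / (c / N) ≤ N := by
  rw [div_div_eq_mul_div, div_le_iff₀ hc, mul_comm N]
  exact mul_le_mul_of_nonneg_right hac hN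

lemma sq_sub_sqrt_mul_weight_le {y s N r ε : ℝ} (hys : |√y - s| ≤ ε) (hN : 0 < N)
    (hr : r ≤ (1 + 2 * ε) ^ 2) (hε : ε ≤ 1) :
    (√y - √((s + ε) ^ 2 / N)) ^ 2 * (2 / 3 * √r + 1 / 3) ≤
      7 / 3 * (8 * ε ^ 2 + 2 * ((√N - 1) ^ 2 / N) * (s + ε) ^ 2) := by
  obtain ⟨h₁, h₂⟩ := abs_le.1 hys
  have hb : 0 ≤ s + ε := by linarith [sqrt_nonneg y]
  have hweight : 2 / 3 * √r + 1 / 3 ≤ 7 / 3 := by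
    have := (sqrt_le_left (by linarith)).2 hr
    linarith
  have hdist :
      (√y - (s + ε) / √N) ^ 2 ≤ 2 * (2 * ε) ^ 2 + 2 * ((s + ε) - (s + ε) / √N) ^ 2 :=
    sq_sub_le_of_abs_sub_le (abs_le.2 ⟨by linarith, by linarith⟩)
  have hscale : ((s + ε) - (s + ε) / √N) ^ 2 = (√N - 1) ^ 2 / √N ^ 2 * (s + ε) ^ 2 := by
    have := sqrt_pos.2 hN
    field_simp
  rw [sq_sqrt hN.le] at hscale
  rw [sqrt_div (sq_nonneg _), sqrt_sq hb]
  calc _ ≤ (√y - (s + ε) / √N) ^ 2 * (7 / 3) :=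
        mul_le_mul_of_nonneg_left hweight (sq_nonneg _)
    _ ≤ _ := by rw [hscale] at hdist; linarith

section

variable {X : Type*} [MeasurableSpace X] {μ : Measure X}

lemma integrable_sq_sqrt_add [IsFiniteMeasure μ] {g : X → ℝ} {M ε : ℝ} (hg : Measurable g)
    (hgM : ∀ x, g x ≤ M) (hε : 0 ≤ ε) : Integrable (fun x => (√(g x) + ε) ^ 2) μ := by
  refine Integrable.of_bound ((hg.sqrt.add_const ε).pow_const 2).aestronglyMeasurable
    ((√M + ε) ^ 2) (ae_of_all _ fun x => ?_)
  rw [norm_of_nonneg (sq_nonneg _)]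
  exact pow_le_pow_left₀ (by positivity) (by gcongr; exact hgM x) 2

lemma one_le_integral_sq_add_of_abs_sqrt_sub_le {φ s : X → ℝ} {ε : ℝ}
    (hφ1 : ∫ x, φ x ∂μ = 1) (hφs : ∀ x, |√(φ x) - s x| ≤ ε)
    (hint : Integrable (fun x => (s x + ε) ^ 2) μ) : 1 ≤ ∫ x, (s x + ε) ^ 2 ∂μ :=
  hφ1 ▸ integral_mono (Integrable.of_integral_ne_zero (by simp [hφ1])) hint
    fun x => le_sq_add_of_abs_sqrt_sub_le (hφs x)

lemma integral_sq_add_le_of_abs_sqrt_sub_le [IsProbabilityMeasure μ] {φ s : X → ℝ} {ε : ℝ}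
    (hε : 0 ≤ ε) (hφ : ∀ x, 0 ≤ φ x) (hφ1 : ∫ x, φ x ∂μ = 1)
    (hφs : ∀ x, |√(φ x) - s x| ≤ ε) :
    ∫ x, (s x + ε) ^ 2 ∂μ ≤ (1 + 2 * ε) ^ 2 := by
  have hφi : Integrable φ μ := Integrable.of_integral_ne_zero (by simp [hφ1])
  have hbound : Integrable (fun x => (1 + 2 * ε) * φ x + (2 * ε + 4 * ε ^ 2)) μ :=
    (hφi.const_mul _).add (integrable_const _)
  calc ∫ x, (s x + ε) ^ 2 ∂μ ≤ ∫ x, ((1 + 2 * ε) * φ x + (2 * ε + 4 * ε ^ 2)) ∂μ :=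
        integral_mono_of_nonneg (ae_of_all _ fun _ => sq_nonneg _) hbound
          (ae_of_all _ fun x => sq_add_le_of_abs_sqrt_sub_le (hφ x) hε (hφs x))
    _ = (1 + 2 * ε) ^ 2 := by
        rw [integral_add (hφi.const_mul _) (integrable_const _), integral_const_mul, hφ1,
          integral_const]
        simp only [probReal_univ, smul_eq_mul]
        ring

lemma integral_sq_sub_sqrt_mul_weight_le [IsProbabilityMeasure μ] {f s : X → ℝ} {ε : ℝ}
    (hε0 : 0 ≤ ε) (hε1 : ε ≤ 1) (hfs : ∀ x, |√(f x) - s x| ≤ ε)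
    (hint : Integrable (fun x => (s x + ε) ^ 2) μ)
    (hN1 : 1 ≤ ∫ x, (s x + ε) ^ 2 ∂μ)
    (hN2 : ∫ x, (s x + ε) ^ 2 ∂μ ≤ (1 + 2 * ε) ^ 2)
    (hratio : ∀ x, f x / ((s x + ε) ^ 2 / ∫ y, (s y + ε) ^ 2 ∂μ) ≤ (1 + 2 * ε) ^ 2) :
    ∫ x, (√(f x) - √((s x + ε) ^ 2 / ∫ y, (s y + ε) ^ 2 ∂μ)) ^ 2 *
        (2 / 3 * √(f x / ((s x + ε) ^ 2 / ∫ y, (s y + ε) ^ 2 ∂μ)) + 1 / 3) ∂μ ≤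
      64 * ε ^ 2 := by
  set N := ∫ y, (s y + ε) ^ 2 ∂μ with hN
  have hN0 : 0 < N := by linarith
  have hsqrtN : 1 ≤ √N ∧ √N ≤ 1 + 2 * ε :=
    ⟨one_le_sqrt.2 hN1, (sqrt_le_left (by linarith)).2 hN2⟩
  have hbound : Integrable
      (fun x => 7 / 3 * (8 * ε ^ 2 + 2 * ((√N - 1) ^ 2 / N) * (s x + ε) ^ 2)) μ :=
    ((integrable_const _).add (hint.const_mul _)).const_mul _
  calc _ ≤ ∫ x, 7 / 3 * (8 * ε ^ 2 + 2 * ((√N - 1) ^ 2 / N) * (s x + ε) ^ 2) ∂μ :=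
        integral_mono_of_nonneg (ae_of_all _ fun _ => by positivity) hbound
          (ae_of_all _ fun x => sq_sub_sqrt_mul_weight_le (hfs x) hN0 (hratio x) hε1)
    _ = 7 / 3 * (8 * ε ^ 2 + 2 * (√N - 1) ^ 2) := by
        rw [integral_const_mul, integral_add (integrable_const _) (hint.const_mul _),
          integral_const, integral_const_mul, ← hN]
        simp only [probReal_univ, one_smul]
        field_simp
    _ ≤ 64 * ε ^ 2 := by nlinarith

end

theorem sup_norm_covering_transfer_general
    {X : Type*} [MeasurableSpace X] (μ : Measure X) [IsProbabilityMeasure μ]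
    (ε : ℝ) (hε0 : 0 < ε) (hε1 : ε ≤ 1)
    (g : X → ℝ) (hg : Measurable g)
    (M : ℝ) (hgbdd : ∀ x, g x ≤ M)
    (f : X → ℝ) (hf1 : ∫ x, f x ∂μ = 1)
    (hfg : ∀ x, |Real.sqrt (f x) - Real.sqrt (g x)| ≤ ε)
    (fstar : X → ℝ) (hfstarnn : ∀ x, 0 ≤ fstar x)
    (hfstar1 : ∫ x, fstar x ∂μ = 1)
    (hfstarg : ∀ x, |Real.sqrt (fstar x) - Real.sqrt (g x)| ≤ ε) :
    (∀ x, f x / ((Real.sqrt (g x) + ε) ^ 2 / ∫ y, (Real.sqrt (g y) + ε) ^ 2 ∂μ) ≤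
        (1 + 2 * ε) ^ 2) ∧
    Real.sqrt (∫ x, (Real.sqrt (f x) -
        Real.sqrt ((Real.sqrt (g x) + ε) ^ 2 / ∫ y, (Real.sqrt (g y) + ε) ^ 2 ∂μ)) ^ 2 *
        ((2 / 3) * Real.sqrt (f x /
          ((Real.sqrt (g x) + ε) ^ 2 / ∫ y, (Real.sqrt (g y) + ε) ^ 2 ∂μ)) + 1 / 3) ∂μ)
      ≤ 8 * ε := by
  have hint := integrable_sq_sqrt_add (μ := μ) hg hgbdd hε0.le
  have hN1 := one_le_integral_sq_add_of_abs_sqrt_sub_le hf1 hfg hint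
  have hN2 := integral_sq_add_le_of_abs_sqrt_sub_le (μ := μ) hε0.le hfstarnn hfstar1 hfstarg
  have hratio :
      ∀ x, f x / ((√(g x) + ε) ^ 2 / ∫ y, (√(g y) + ε) ^ 2 ∂μ) ≤ (1 + 2 * ε) ^ 2 :=
    fun x => (div_div_le_of_le (le_sq_add_of_abs_sqrt_sub_le (hfg x)) (by positivity)
      (by linarith)).trans hN2
  refine ⟨hratio, ?_⟩
  calc _ ≤ √((8 * ε) ^ 2) := sqrt_le_sqrt (by
        linarith [integral_sq_sub_sqrt_mul_weight_le hε0.le hε1 hfg hint hN1 hN2 hratio])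
    _ = 8 * ε := sqrt_sq (by linarith)

/-- supremum-norm covering transfer. If `‖√f-√g‖_∞ ≤ ε` and some density
`f*` also satisfies `‖√f*-√g‖_∞ ≤ ε`, then for
`f_g = (√g+ε)²/∫(√g+ε)²dμ` one has `‖f/f_g‖_∞ ≤ (1+2ε)²` and `H*(f,f_g) ≤ 8ε`. -/
theorem sup_norm_covering_transfer
    {X : Type*} [MeasurableSpace X] (μ : Measure X) [IsProbabilityMeasure μ]
    (ε : ℝ) (hε0 : 0 < ε) (hε1 : ε ≤ 1)
    (g : X → ℝ) (hg : Measurable g) (hgnn : ∀ x, 0 ≤ g x)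
    (M : ℝ) (hgbdd : ∀ x, g x ≤ M)
    (f : X → ℝ) (hf : Measurable f) (hfnn : ∀ x, 0 ≤ f x) (hf1 : ∫ x, f x ∂μ = 1)
    (hfg : ∀ x, |Real.sqrt (f x) - Real.sqrt (g x)| ≤ ε)
    (fstar : X → ℝ) (hfstar : Measurable fstar) (hfstarnn : ∀ x, 0 ≤ fstar x)
    (hfstar1 : ∫ x, fstar x ∂μ = 1)
    (hfstarg : ∀ x, |Real.sqrt (fstar x) - Real.sqrt (g x)| ≤ ε) :
    (∀ x, f x / ((Real.sqrt (g x) + ε) ^ 2 / ∫ y, (Real.sqrt (g y) + ε) ^ 2 ∂μ) ≤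
        (1 + 2 * ε) ^ 2) ∧
    Real.sqrt (∫ x, (Real.sqrt (f x) -
        Real.sqrt ((Real.sqrt (g x) + ε) ^ 2 / ∫ y, (Real.sqrt (g y) + ε) ^ 2 ∂μ)) ^ 2 *
        ((2 / 3) * Real.sqrt (f x /
          ((Real.sqrt (g x) + ε) ^ 2 / ∫ y, (Real.sqrt (g y) + ε) ^ 2 ∂μ)) + 1 / 3) ∂μ)
      ≤ 8 * ε :=
  sup_norm_covering_transfer_general μ ε hε0 hε1 g hg M hgbdd f hf1 hfg fstar hfstarnn hfstar1
    hfstarg
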